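/- Let H₁ and H₂ be Hilbert spaces over 𝕜 (𝕜 = ℝ or ℂ) with H₁ nontrivial, and let T : H₁ → H₂ be a bounded linear operator that is not a scalar multiple of an isometry, i.e., there is no constant c ≥ 0 with ‖Tz‖ = c‖z‖ for all z ∈ H₁. If both M_T and m_T are nonempty, then m_T ⊆ (M_T)^⊥; that is, ⟨y, x⟩ = 0 for every y ∈ m_T and every x ∈ M_T. -/

import Mathlib

/-!
On the unit sphere, `‖T z‖²` is the Rayleigh quotient of the self-adjoint operator `T† T`, so a
maximizer `x` and a minimizer `y` of `‖T z‖` are eigenvectors of `T† T`, with eigenvalues `‖T‖²`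
and `m(T)²`. These eigenvalues differ because `T` is not a multiple of an isometry, and
eigenvectors of a self-adjoint operator for distinct eigenvalues are orthogonal.
-/

noncomputable def minNorm {𝕜 X Y : Type*} [RCLike 𝕜] [NormedAddCommGroup X]
    [NormedSpace 𝕜 X] [NormedAddCommGroup Y] [NormedSpace 𝕜 Y] (T : X →L[𝕜] Y) : ℝ :=
  sInf {r : ℝ | ∃ x : X, ‖x‖ = 1 ∧ r = ‖T x‖}

open Metric
open scoped InnerProduct

section minNorm

variable {𝕜 X Y : Type*} [RCLike 𝕜] [NormedAddCommGroup X] [NormedSpace 𝕜 X]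
  [NormedAddCommGroup Y] [NormedSpace 𝕜 Y] (T : X →L[𝕜] Y)

lemma minNorm_nonneg : 0 ≤ minNorm T :=
  Real.sInf_nonneg fun _ ⟨_, _, hr⟩ => hr ▸ norm_nonneg _

lemma minNorm_le_norm_apply {x : X} (hx : ‖x‖ = 1) : minNorm T ≤ ‖T x‖ :=
  csInf_le ⟨0, fun _ ⟨_, _, hr⟩ => hr ▸ norm_nonneg _⟩ ⟨x, hx, rfl⟩

lemma minNorm_mul_norm_le (z : X) : minNorm T * ‖z‖ ≤ ‖T z‖ := by
  rcases eq_or_ne z 0 with rfl | hz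
  · simp
  have hz' : ‖z‖ ≠ 0 := norm_ne_zero_iff.2 hz
  have h := minNorm_le_norm_apply T (x := (‖z‖⁻¹ : 𝕜) • z) (by simp [norm_smul, hz'])
  rw [map_smul, norm_smul, norm_inv, RCLike.norm_ofReal, abs_norm] at h
  rwa [← le_inv_mul_iff₀' (norm_pos_iff.2 hz)]

lemma minNorm_lt_opNorm (hT : ¬ ∃ c : ℝ, 0 ≤ c ∧ ∀ z : X, ‖T z‖ = c * ‖z‖) :
    minNorm T < ‖T‖ := by
  by_contra! h
  exact hT ⟨‖T‖, norm_nonneg T, fun z => le_antisymm (T.le_opNorm z)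
    ((mul_le_mul_of_nonneg_right h (norm_nonneg z)).trans (minNorm_mul_norm_le T z))⟩

end minNorm

namespace ContinuousLinearMap

variable {𝕜 E F : Type*} [RCLike 𝕜] [NormedAddCommGroup E] [InnerProductSpace 𝕜 E]
  [NormedAddCommGroup F] [InnerProductSpace 𝕜 F] [CompleteSpace E] [CompleteSpace F]
  (T : E →L[𝕜] F)

lemma isSelfAdjoint_adjoint_comp_self : IsSelfAdjoint (T† ∘L T) := by
  rw [isSelfAdjoint_iff', adjoint_comp, adjoint_adjoint]

lemma reApplyInnerSelf_adjoint_comp_self (x : E) :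
    (T† ∘L T).reApplyInnerSelf x = ‖T x‖ ^ 2 :=
  (apply_norm_sq_eq_inner_adjoint_left T x).symm

lemma adjoint_comp_self_apply_of_isLocalExtrOn {x : E}
    (hx : IsLocalExtrOn (fun z => ‖T z‖) (sphere 0 ‖x‖) x) :
    (T† ∘L T) x = ((‖T x‖ ^ 2 / ‖x‖ ^ 2 : ℝ) : 𝕜) • x := by
  have hsq : IsLocalExtrOn (T† ∘L T).reApplyInnerSelf (sphere 0 ‖x‖) x := by
    rw [funext (reApplyInnerSelf_adjoint_comp_self T)]
    rcases hx with h | h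
    · exact Or.inl (h.mono fun z hz => pow_le_pow_left₀ (norm_nonneg _) hz 2)
    · exact Or.inr (h.mono fun z hz => pow_le_pow_left₀ (norm_nonneg _) hz 2)
  rw [(isSelfAdjoint_adjoint_comp_self T).eq_smul_self_of_isLocalExtrOn hsq,
    rayleighQuotient, reApplyInnerSelf_adjoint_comp_self]

end ContinuousLinearMap

theorem stmt_12_general {𝕜 H₁ H₂ : Type*} [RCLike 𝕜]
    [NormedAddCommGroup H₁] [InnerProductSpace 𝕜 H₁] [CompleteSpace H₁]
    [NormedAddCommGroup H₂] [InnerProductSpace 𝕜 H₂] [CompleteSpace H₂]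
    (T : H₁ →L[𝕜] H₂)
    (hT : ¬ ∃ c : ℝ, 0 ≤ c ∧ ∀ z : H₁, ‖T z‖ = c * ‖z‖) :
    ∀ y ∈ {x : H₁ | ‖x‖ = 1 ∧ ‖T x‖ = minNorm T},
      ∀ x ∈ {x : H₁ | ‖x‖ = 1 ∧ ‖T x‖ = ‖T‖}, (inner 𝕜 y x : 𝕜) = 0 := by
  rintro y ⟨hy1, hym⟩ x ⟨hx1, hxM⟩
  have hy : (T† ∘L T) y = ((minNorm T ^ 2 : ℝ) : 𝕜) • y := by
    have hmin : IsMinOn (fun z => ‖T z‖) (sphere 0 ‖y‖) y := fun z hz => by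
      simpa [hym] using minNorm_le_norm_apply T (x := z) (by simpa [hy1] using hz)
    simpa [hym, hy1] using T.adjoint_comp_self_apply_of_isLocalExtrOn (Or.inl hmin.localize)
  have hx : (T† ∘L T) x = ((‖T‖ ^ 2 : ℝ) : 𝕜) • x := by
    have hmax : IsMaxOn (fun z => ‖T z‖) (sphere 0 ‖x‖) x := fun z hz => by
      simpa [hxM, (by simpa [hx1] using hz : ‖z‖ = 1)] using T.le_opNorm z
    simpa [hxM, hx1] using T.adjoint_comp_self_apply_of_isLocalExtrOn (Or.inr hmax.localize)
  have hne : ((minNorm T ^ 2 : ℝ) : 𝕜) ≠ ((‖T‖ ^ 2 : ℝ) : 𝕜) := by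
    rw [Ne, RCLike.ofReal_inj]
    exact (pow_lt_pow_left₀ (minNorm_lt_opNorm T hT) (minNorm_nonneg T) two_ne_zero).ne
  exact T.isSelfAdjoint_adjoint_comp_self.isSymmetric.orthogonalFamily_eigenspaces hne
    ⟨y, Module.End.mem_eigenspace_iff.2 hy⟩ ⟨x, Module.End.mem_eigenspace_iff.2 hx⟩

theorem stmt_12 {𝕜 H₁ H₂ : Type*} [RCLike 𝕜]
    [NormedAddCommGroup H₁] [InnerProductSpace 𝕜 H₁] [CompleteSpace H₁] [Nontrivial H₁]
    [NormedAddCommGroup H₂] [InnerProductSpace 𝕜 H₂] [CompleteSpace H₂]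
    (T : H₁ →L[𝕜] H₂)
    (hT : ¬ ∃ c : ℝ, 0 ≤ c ∧ ∀ z : H₁, ‖T z‖ = c * ‖z‖)
    (hM : {x : H₁ | ‖x‖ = 1 ∧ ‖T x‖ = ‖T‖}.Nonempty)
    (hm : {x : H₁ | ‖x‖ = 1 ∧ ‖T x‖ = minNorm T}.Nonempty) :
    ∀ y ∈ {x : H₁ | ‖x‖ = 1 ∧ ‖T x‖ = minNorm T},
      ∀ x ∈ {x : H₁ | ‖x‖ = 1 ∧ ‖T x‖ = ‖T‖}, (inner 𝕜 y x : 𝕜) = 0 :=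
  stmt_12_general T hT
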